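/- arXiv:2604.01041 — 2 statements merged into one kernel-verified Lean document; each statement's English description precedes it below -/
import Mathlib

section
/- Let a = (a₁,…,a_m) ∈ {0,1}^m be an assignment and let C ∈ Config_{n,m} satisfy C ∼ Table_φ(a). Then every cell of C inside [n+1]×[m+2] is locally correct; in particular, Table_φ(a) is locally correct. -/
/-!
Cellular automata on bounded configurations (Durand / Kapytka setup).

A cell state has components (coord, flag, a, pd, pc, label), each possibly the
undefined value `□` (modelled by `Option`).  Configurations are maps
`ℤ × ℤ → CellState` that are quiescent exactly outside the rectangle
`[n+1] × [m+2]`.  A CNF formula `φ` is given by its clause–literal incidence: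
`φ i j = some true` iff `x_j ∈ C_i`, `some false` iff `¬x_j ∈ C_i`,
`none` iff neither occurs.
-/

namespace CA

structure CellState where
  coord : Option ℤ × Option ℤ
  flag  : Option ℤ
  aval  : Option Bool
  pd    : Option Bool
  pc    : Option Bool
  label : Option Bool
  deriving DecidableEq

/-- The quiescent state `q`: all components are `□`. -/
def qState : CellState := ⟨(none, none), none, none, none, none, none⟩

abbrev Cfg := ℤ × ℤ → CellState

/-- Clause–literal incidence of a CNF formula. -/
abbrev CNF := ℤ → ℤ → Option Bool

/-- The position `p` lies inside the rectangle `[n+1] × [m+2]`. -/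
def inside (n m : ℕ) (p : ℤ × ℤ) : Prop :=
  0 ≤ p.1 ∧ p.1 ≤ (n : ℤ) ∧ 0 ≤ p.2 ∧ p.2 ≤ (m : ℤ) + 1

def rightN (p : ℤ × ℤ) : ℤ × ℤ := (p.1, p.2 + 1)
def leftN  (p : ℤ × ℤ) : ℤ × ℤ := (p.1, p.2 - 1)
def belowN (p : ℤ × ℤ) : ℤ × ℤ := (p.1 + 1, p.2)
def aboveN (p : ℤ × ℤ) : ℤ × ℤ := (p.1 - 1, p.2)

/-- `q` is a von Neumann neighbour of `p`. -/
def vnNbr (p q : ℤ × ℤ) : Prop :=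
  q = rightN p ∨ q = leftN p ∨ q = belowN p ∨ q = aboveN p

/-- The state set `S_{n,m}`: the seven classes (S1)–(S7). -/
def ValidState (n m : ℕ) (s : CellState) : Prop :=
  (∃ l : Bool, s = ⟨(some 0, some 0), none, none, none, none, some l⟩) ∨
  (∃ (i : ℤ) (l : Bool), 1 ≤ i ∧ i ≤ (n : ℤ) ∧
      s = ⟨(some i, some 0), none, none, none, none, some l⟩) ∨
  (∃ (j : ℤ) (a l : Bool), 1 ≤ j ∧ j ≤ (m : ℤ) ∧
      s = ⟨(some 0, some j), none, some a, none, none, some l⟩) ∨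
  (∃ l : Bool, s = ⟨(some 0, some ((m : ℤ) + 1)), none, none, none, none, some l⟩) ∨
  (∃ (i : ℤ) (pc l : Bool), 1 ≤ i ∧ i ≤ (n : ℤ) ∧
      s = ⟨(some i, some ((m : ℤ) + 1)), none, none, none, some pc, some l⟩) ∨
  (∃ (i j fl : ℤ) (a pd l : Bool), 1 ≤ i ∧ i ≤ (n : ℤ) ∧ 1 ≤ j ∧ j ≤ (m : ℤ) ∧
      (fl = -1 ∨ fl = 0 ∨ fl = 1) ∧
      s = ⟨(some i, some j), some fl, some a, some pd, none, some l⟩) ∨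
  s = qState

/-- `C ∈ Config_{n,m}`. -/
def IsConfig (n m : ℕ) (C : Cfg) : Prop :=
  (∀ p, ValidState n m (C p)) ∧
  (∀ p, inside n m p → C p ≠ qState) ∧
  (∀ p, ¬ inside n m p → C p = qState)

/-- The literal of clause `C_i` on variable `x_j` is satisfied by `a`. -/
def litSat (φ : CNF) (a : ℤ → Bool) (i j : ℤ) : Prop :=
  (φ i j = some true ∧ a j = true) ∨ (φ i j = some false ∧ a j = false)

/-- Clause `C_i` is satisfied by the assignment `a`. -/
def clauseSat (φ : CNF) (a : ℤ → Bool) (m : ℕ) (i : ℤ) : Prop :=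
  ∃ j : ℤ, 1 ≤ j ∧ j ≤ (m : ℤ) ∧ litSat φ a i j

/-- The CNF formula `φ` (with `n` clauses, `m` variables) is satisfiable. -/
def Satisfiable (φ : CNF) (n m : ℕ) : Prop :=
  ∃ a : ℤ → Bool, ∀ i : ℤ, 1 ≤ i → i ≤ (n : ℤ) → clauseSat φ a m i

/-- The cell at position `q` behaves correctly for theoretical index `idx`:
if `idx` is inside the rectangle its written coordinates are `idx`,
otherwise the cell is quiescent. -/
def nbrCoordOK (n m : ℕ) (C : Cfg) (q idx : ℤ × ℤ) : Prop :=
  (inside n m idx → (C q).coord = (some idx.1, some idx.2)) ∧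
  (¬ inside n m idx → C q = qState)

/-- (A) Index consistency. -/
def ruleA (n m : ℕ) (C : Cfg) (p : ℤ × ℤ) : Prop :=
  ∀ i j : ℤ, 0 ≤ i → i ≤ (n : ℤ) → 0 ≤ j → j ≤ (m : ℤ) + 1 →
    ((C p).coord = (some i, some j) ↔
      (nbrCoordOK n m C (rightN p) (i, j + 1) ∧
       nbrCoordOK n m C (leftN p) (i, j - 1) ∧
       nbrCoordOK n m C (belowN p) (i + 1, j) ∧
       nbrCoordOK n m C (aboveN p) (i - 1, j)))

/-- (B) Formula consistency. -/
def ruleB (φ : CNF) (n m : ℕ) (C : Cfg) (p : ℤ × ℤ) : Prop :=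
  ∀ i j : ℤ, (C p).coord = (some i, some j) →
    1 ≤ i → i ≤ (n : ℤ) → 1 ≤ j → j ≤ (m : ℤ) →
      (((C p).flag = some 1 ↔ φ i j = some true) ∧
       ((C p).flag = some (-1) ↔ φ i j = some false) ∧
       ((C p).flag = some 0 ↔ φ i j = none))

/-- (C1) the `a`-value is constant along columns `1 ≤ j ≤ m`. -/
def ruleC1 (n m : ℕ) (C : Cfg) (p : ℤ × ℤ) : Prop :=
  ∀ i j : ℤ, (C p).coord = (some i, some j) → 1 ≤ j → j ≤ (m : ℤ) →
    ((inside n m (aboveN p) → (C (aboveN p)).aval = (C p).aval) ∧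
     (inside n m (belowN p) → (C (belowN p)).aval = (C p).aval))

/-- (C2) partial conjunction recurrence for rows `r ≥ 2`. -/
def ruleC2 (n m : ℕ) (C : Cfg) (p : ℤ × ℤ) : Prop :=
  ∀ r : ℤ, (C p).coord = (some r, some ((m : ℤ) + 1)) → 2 ≤ r →
    ((C p).pc = some true ↔
      ((C (aboveN p)).pc = some true ∧ (C (leftN p)).pd = some true))

/-- (C3) partial conjunction base case. -/
def ruleC3 (n m : ℕ) (C : Cfg) (p : ℤ × ℤ) : Prop :=
  (C p).coord = (some 1, some ((m : ℤ) + 1)) →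
    ((C p).pc = some true ↔ (C (leftN p)).pd = some true)

/-- The literal written in the cell is satisfied:
`flag(s) = 1 ∧ a(s) = 1` or `flag(s) = −1 ∧ a(s) = 0`. -/
def litHolds (C : Cfg) (p : ℤ × ℤ) : Prop :=
  ((C p).flag = some 1 ∧ (C p).aval = some true) ∨
  ((C p).flag = some (-1) ∧ (C p).aval = some false)

/-- (D1) partial disjunction recurrence for columns `2 ≤ j ≤ m`. -/
def ruleD1 (n m : ℕ) (C : Cfg) (p : ℤ × ℤ) : Prop :=
  ∀ i j : ℤ, (C p).coord = (some i, some j) →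
    1 ≤ i → i ≤ (n : ℤ) → 2 ≤ j → j ≤ (m : ℤ) →
      ((C p).pd = some true ↔ ((C (leftN p)).pd = some true ∨ litHolds C p))

/-- (D2) partial disjunction base case. -/
def ruleD2 (n m : ℕ) (C : Cfg) (p : ℤ × ℤ) : Prop :=
  ∀ i : ℤ, (C p).coord = (some i, some 1) → 1 ≤ i → i ≤ (n : ℤ) →
    ((C p).pd = some true ↔ litHolds C p)

/-- (E) Technical conditions (E1)–(E4). -/
def ruleE (n m : ℕ) (C : Cfg) (p : ℤ × ℤ) : Prop :=
  ∀ i j : ℤ, (C p).coord = (some i, some j) →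
    (((j = 0 ∨ (i = 0 ∧ j = 0) ∨ (i = 0 ∧ j = (m : ℤ) + 1)) →
        (C p).flag = none ∧ (C p).aval = none ∧ (C p).pd = none ∧ (C p).pc = none) ∧
     ((i = 0 ∧ 1 ≤ j ∧ j ≤ (m : ℤ)) →
        (C p).flag = none ∧ (C p).pd = none ∧ (C p).pc = none) ∧
     ((j = (m : ℤ) + 1 ∧ 1 ≤ i) →
        (C p).flag = none ∧ (C p).aval = none ∧ (C p).pd = none) ∧
     ((1 ≤ i ∧ i ≤ (n : ℤ) ∧ 1 ≤ j ∧ j ≤ (m : ℤ)) → (C p).pc = none))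

/-- The cell of `C` at `p` is locally correct: rules (A)–(E). -/
def LocallyCorrect (φ : CNF) (n m : ℕ) (C : Cfg) (p : ℤ × ℤ) : Prop :=
  ruleA n m C p ∧ ruleB φ n m C p ∧ ruleC1 n m C p ∧ ruleC2 n m C p ∧
  ruleC3 n m C p ∧ ruleD1 n m C p ∧ ruleD2 n m C p ∧ ruleE n m C p

/-- The (non-quiescent) cell of `C` at `p` is blue: it is locally correct and,
if it is an output cell, its `pc` component is `1`.  A cell is red iff it is
not blue. -/
def Blue (φ : CNF) (n m : ℕ) (C : Cfg) (p : ℤ × ℤ) : Prop :=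
  C p ≠ qState ∧ LocallyCorrect φ n m C p ∧
  ((C p).coord = (some (n : ℤ), some ((m : ℤ) + 1)) → (C p).pc = some true)

open scoped Classical in
/-- The snake-like successor map on indices of the rectangle `[n+1] × [m+2]`. -/
noncomputable def suc (n m : ℕ) (p : ℤ × ℤ) : ℤ × ℤ :=
  if p = (0, 0) ∨ (Even p.1 ∧ 1 ≤ p.2 ∧ p.2 ≤ (m : ℤ)) then (p.1, p.2 + 1)
  else if p = ((n : ℤ), 1) ∨ (Odd p.1 ∧ 2 ≤ p.2 ∧ p.2 ≤ (m : ℤ) + 1) then (p.1, p.2 - 1)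
  else if (Odd p.1 ∧ p.2 = 1 ∧ p.1 ≠ (n : ℤ)) ∨ (Even p.1 ∧ p.2 = (m : ℤ) + 1) then
    (p.1 + 1, p.2)
  else (p.1 - 1, p.2)

/-- `q` is the successor cell of `p` in `C`: a von Neumann neighbour whose
written coordinates are `suc` of the written coordinates of `p`. -/
def IsSucc (n m : ℕ) (C : Cfg) (p q : ℤ × ℤ) : Prop :=
  vnNbr p q ∧ ∃ i j : ℤ, (C p).coord = (some i, some j) ∧
    (C q).coord = (some (suc n m (i, j)).1, some (suc n m (i, j)).2)

/-- The position of the successor cell of `p` (the geometric neighbour of `p`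
in the direction from the written coordinates of `p` to their `suc`). -/
noncomputable def succPos (n m : ℕ) (C : Cfg) (p : ℤ × ℤ) : ℤ × ℤ :=
  match (C p).coord with
  | (some i, some j) => (p.1 + ((suc n m (i, j)).1 - i), p.2 + ((suc n m (i, j)).2 - j))
  | _ => p

open scoped Classical in
/-- The global map of the cellular automaton `A_φ`: a blue cell replaces its
label by `label(s₁) XOR label(s_k)` where `s_k` is the state of its successor
cell; a red cell is unchanged. -/
noncomputable def step (φ : CNF) (n m : ℕ) (C : Cfg) : Cfg := fun p =>
  if Blue φ n m C p then
    { C p with label := Option.map₂ Bool.xor ((C p).label) ((C (succPos n m C p)).label) }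
  else C p

/-- `C ∼ C'`: the configurations agree on all state components except
possibly the labels. -/
def Similar (C C' : Cfg) : Prop :=
  ∀ p, (C p).coord = (C' p).coord ∧ (C p).flag = (C' p).flag ∧
    (C p).aval = (C' p).aval ∧ (C p).pd = (C' p).pd ∧ (C p).pc = (C' p).pc

/-- Encoding of clause–literal occurrence as flag value in `{−1, 0, 1}`. -/
def flagInt (o : Option Bool) : ℤ :=
  match o with
  | some true => 1
  | some false => -1
  | none => 0

/-- Truth value under `a` of the disjunction of the literals of `C_i`
among the variables `x₁, …, x_j`. -/
noncomputable def pdVal (φ : CNF) (a : ℤ → Bool) (i j : ℤ) : Bool :=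
  @decide (∃ u : ℤ, 1 ≤ u ∧ u ≤ j ∧ litSat φ a i u) (Classical.propDecidable _)

/-- Truth value under `a` of the partial conjunction `C₁ ∧ … ∧ C_i`. -/
noncomputable def pcVal (φ : CNF) (a : ℤ → Bool) (m : ℕ) (i : ℤ) : Bool :=
  @decide (∀ v : ℤ, 1 ≤ v → v ≤ i → clauseSat φ a m v) (Classical.propDecidable _)

open scoped Classical in
/-- The computation table `Table_φ(a)`, with all labels `0`. -/
noncomputable def Table (φ : CNF) (n m : ℕ) (a : ℤ → Bool) : Cfg := fun p =>
  if inside n m p then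
    { coord := (some p.1, some p.2)
      flag := if 1 ≤ p.1 ∧ p.1 ≤ (n : ℤ) ∧ 1 ≤ p.2 ∧ p.2 ≤ (m : ℤ) then
          some (flagInt (φ p.1 p.2)) else none
      aval := if 1 ≤ p.2 ∧ p.2 ≤ (m : ℤ) then some (a p.2) else none
      pd := if 1 ≤ p.1 ∧ p.1 ≤ (n : ℤ) ∧ 1 ≤ p.2 ∧ p.2 ≤ (m : ℤ) then
          some (pdVal φ a p.1 p.2) else none
      pc := if 1 ≤ p.1 ∧ p.1 ≤ (n : ℤ) ∧ p.2 = (m : ℤ) + 1 then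
          some (pcVal φ a m p.1) else none
      label := some false }
  else qState

/-!
The table satisfies rules (B)–(E) because its `pd` and `pc` columns are, by definition, the
partial disjunctions and conjunctions that the recurrences (C) and (D) compute, and rule (A)
because every cell of the table carries its true coordinates. Local correctness reads every
component except the label, and the label only through comparisons with the quiescent state,
so it passes to every configuration similar to the table.
-/

variable {φ : CNF} {n m : ℕ} {a : ℤ → Bool}

@[simp] lemma flagInt_eq_one_iff {o : Option Bool} : flagInt o = 1 ↔ o = some true := by
  rcases o with _ | _ | _ <;> simp [flagInt]

@[simp] lemma flagInt_eq_neg_one_iff {o : Option Bool} : flagInt o = -1 ↔ o = some false := by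
  rcases o with _ | _ | _ <;> simp [flagInt]

@[simp] lemma flagInt_eq_zero_iff {o : Option Bool} : flagInt o = 0 ↔ o = none := by
  rcases o with _ | _ | _ <;> simp [flagInt]

lemma pdVal_one {i : ℤ} : pdVal φ a i 1 = true ↔ litSat φ a i 1 := by
  simp only [pdVal, decide_eq_true_eq]
  constructor
  · rintro ⟨u, h1, h2, h⟩
    rwa [le_antisymm h2 h1] at h
  · exact fun h => ⟨1, le_rfl, le_rfl, h⟩

lemma pdVal_eq_true_iff_of_two_le {i j : ℤ} (hj : 2 ≤ j) :
    pdVal φ a i j = true ↔ pdVal φ a i (j - 1) = true ∨ litSat φ a i j := by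
  simp only [pdVal, decide_eq_true_eq]
  constructor
  · rintro ⟨u, h1, h2, h⟩
    rcases h2.lt_or_eq with h2 | rfl
    · exact Or.inl ⟨u, h1, by omega, h⟩
    · exact Or.inr h
  · rintro (⟨u, h1, h2, h⟩ | h)
    · exact ⟨u, h1, by omega, h⟩
    · exact ⟨j, by omega, le_rfl, h⟩

lemma pdVal_eq_true_iff_clauseSat {i : ℤ} : pdVal φ a i m = true ↔ clauseSat φ a m i := by
  simp only [pdVal, decide_eq_true_eq, clauseSat]

lemma pcVal_one : pcVal φ a m 1 = true ↔ clauseSat φ a m 1 := by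
  simp only [pcVal, decide_eq_true_eq]
  constructor
  · exact fun h => h 1 le_rfl le_rfl
  · intro h v h1 h2
    rwa [le_antisymm h2 h1]

lemma pcVal_eq_true_iff_of_two_le {r : ℤ} (hr : 2 ≤ r) :
    pcVal φ a m r = true ↔ pcVal φ a m (r - 1) = true ∧ clauseSat φ a m r := by
  simp only [pcVal, decide_eq_true_eq]
  constructor
  · exact fun h => ⟨fun v h1 h2 => h v h1 (by omega), h r (by omega) le_rfl⟩
  · rintro ⟨h, hr⟩ v h1 h2
    rcases h2.lt_or_eq with h2 | rfl
    · exact h v h1 (by omega)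
    · exact hr

lemma table_eq_qState_iff {p : ℤ × ℤ} : Table φ n m a p = qState ↔ ¬ inside n m p := by
  by_cases hp : inside n m p <;> simp [Table, hp, qState]

lemma table_coord_eq_some_iff {p : ℤ × ℤ} {x y : ℤ} :
    (Table φ n m a p).coord = (some x, some y) ↔ inside n m p ∧ p = (x, y) := by
  by_cases hp : inside n m p <;> simp [Table, hp, qState, Prod.ext_iff]

lemma table_nbrCoordOK_self (q : ℤ × ℤ) : nbrCoordOK n m (Table φ n m a) q q :=
  ⟨fun hq => table_coord_eq_some_iff.2 ⟨hq, rfl⟩, table_eq_qState_iff.2⟩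

lemma table_ruleA {p : ℤ × ℤ} (hp : inside n m p) : ruleA n m (Table φ n m a) p := by
  intro i j hi0 hin hj0 hjm
  rw [table_coord_eq_some_iff]
  constructor
  · rintro ⟨-, rfl⟩
    exact ⟨table_nbrCoordOK_self _, table_nbrCoordOK_self _, table_nbrCoordOK_self _,
      table_nbrCoordOK_self _⟩
  · rintro ⟨hr, hl, -, -⟩
    refine ⟨hp, ?_⟩
    -- one of the horizontal neighbours of `(i, j)` lies inside, and its coordinates pin down `p`
    by_cases hj : j ≤ m
    · obtain ⟨-, h⟩ := table_coord_eq_some_iff.1 (hr.1 ⟨hi0, hin, by omega, by omega⟩)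
      simp only [rightN, Prod.ext_iff] at h ⊢
      omega
    · obtain ⟨-, h⟩ := table_coord_eq_some_iff.1 (hl.1 ⟨hi0, hin, by omega, by omega⟩)
      simp only [leftN, Prod.ext_iff] at h ⊢
      omega

section TableComponents

variable {i j : ℤ}

lemma table_flag (hi : 1 ≤ i ∧ i ≤ n) (hj : 1 ≤ j ∧ j ≤ m) :
    (Table φ n m a (i, j)).flag = some (flagInt (φ i j)) := by
  have hp : inside n m (i, j) := ⟨by omega, hi.2, by omega, by omega⟩
  simp [Table, hp, hi, hj]

lemma table_aval (hi : 0 ≤ i ∧ i ≤ n) (hj : 1 ≤ j ∧ j ≤ m) :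
    (Table φ n m a (i, j)).aval = some (a j) := by
  have hp : inside n m (i, j) := ⟨hi.1, hi.2, by omega, by omega⟩
  simp [Table, hp, hj]

lemma table_pd (hi : 1 ≤ i ∧ i ≤ n) (hj : 1 ≤ j ∧ j ≤ m) :
    (Table φ n m a (i, j)).pd = some (pdVal φ a i j) := by
  have hp : inside n m (i, j) := ⟨by omega, hi.2, by omega, by omega⟩
  simp [Table, hp, hi, hj]

lemma table_pc (hi : 1 ≤ i ∧ i ≤ n) :
    (Table φ n m a (i, m + 1)).pc = some (pcVal φ a m i) := by
  have hp : inside n m (i, m + 1) := ⟨by omega, hi.2, by omega, le_rfl⟩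
  simp [Table, hp, hi]

lemma table_litHolds_iff (hi : 1 ≤ i ∧ i ≤ n) (hj : 1 ≤ j ∧ j ≤ m) :
    litHolds (Table φ n m a) (i, j) ↔ litSat φ a i j := by
  simp [litHolds, litSat, table_flag hi hj, table_aval ⟨by omega, hi.2⟩ hj]

end TableComponents

lemma table_ruleB {p : ℤ × ℤ} : ruleB φ n m (Table φ n m a) p := by
  intro i j hc hi1 hin hj1 hjm
  obtain ⟨-, rfl⟩ := table_coord_eq_some_iff.1 hc
  simp [table_flag ⟨hi1, hin⟩ ⟨hj1, hjm⟩]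

lemma table_ruleC1 {p : ℤ × ℤ} : ruleC1 n m (Table φ n m a) p := by
  intro i j hc hj1 hjm
  obtain ⟨⟨hi0, hin, -⟩, rfl⟩ := table_coord_eq_some_iff.1 hc
  dsimp only at hi0 hin
  constructor
  · rintro ⟨hi, -⟩
    dsimp only [aboveN] at hi ⊢
    rw [table_aval ⟨hi, by omega⟩ ⟨hj1, hjm⟩, table_aval ⟨hi0, hin⟩ ⟨hj1, hjm⟩]
  · rintro ⟨-, hi, -⟩
    dsimp only [belowN] at hi ⊢
    rw [table_aval ⟨by omega, hi⟩ ⟨hj1, hjm⟩, table_aval ⟨hi0, hin⟩ ⟨hj1, hjm⟩]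

lemma leftN_mk_add_one (r c : ℤ) : leftN (r, c + 1) = (r, c) := by
  simp [leftN]

lemma table_ruleC2 (hm : 1 ≤ m) {p : ℤ × ℤ} : ruleC2 n m (Table φ n m a) p := by
  intro r hc hr
  obtain ⟨⟨-, hrn, -⟩, rfl⟩ := table_coord_eq_some_iff.1 hc
  rw [aboveN, table_pc ⟨by omega, hrn⟩, table_pc ⟨by omega, by omega⟩, leftN_mk_add_one,
    table_pd ⟨by omega, hrn⟩ ⟨by exact_mod_cast hm, le_rfl⟩]
  simp [pcVal_eq_true_iff_of_two_le hr, pdVal_eq_true_iff_clauseSat]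

lemma table_ruleC3 (hm : 1 ≤ m) {p : ℤ × ℤ} : ruleC3 n m (Table φ n m a) p := by
  intro hc
  obtain ⟨⟨-, hn, -⟩, rfl⟩ := table_coord_eq_some_iff.1 hc
  rw [table_pc ⟨le_rfl, hn⟩, leftN_mk_add_one,
    table_pd ⟨le_rfl, hn⟩ ⟨by exact_mod_cast hm, le_rfl⟩]
  simp [pcVal_one, pdVal_eq_true_iff_clauseSat]

lemma table_ruleD1 {p : ℤ × ℤ} : ruleD1 n m (Table φ n m a) p := by
  intro i j hc hi1 hin hj2 hjm
  obtain ⟨-, rfl⟩ := table_coord_eq_some_iff.1 hc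
  rw [leftN, table_pd ⟨hi1, hin⟩ ⟨by omega, hjm⟩, table_pd ⟨hi1, hin⟩ ⟨by omega, by omega⟩,
    table_litHolds_iff ⟨hi1, hin⟩ ⟨by omega, hjm⟩]
  simp [pdVal_eq_true_iff_of_two_le hj2]

lemma table_ruleD2 (hm : 1 ≤ m) {p : ℤ × ℤ} : ruleD2 n m (Table φ n m a) p := by
  intro i hc hi1 hin
  obtain ⟨-, rfl⟩ := table_coord_eq_some_iff.1 hc
  have hm : (1 : ℤ) ≤ m := by exact_mod_cast hm
  rw [table_pd ⟨hi1, hin⟩ ⟨le_rfl, hm⟩, table_litHolds_iff ⟨hi1, hin⟩ ⟨le_rfl, hm⟩]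
  simp [pdVal_one]

lemma table_ruleE {p : ℤ × ℤ} : ruleE n m (Table φ n m a) p := by
  intro i j hc
  obtain ⟨hp, rfl⟩ := table_coord_eq_some_iff.1 hc
  simp only [Table, hp, ↓reduceIte, ite_eq_right_iff, reduceCtorEq, imp_false, not_and, not_le]
  omega

lemma table_locallyCorrect (hm : 1 ≤ m) {p : ℤ × ℤ} (hp : inside n m p) :
    LocallyCorrect φ n m (Table φ n m a) p :=
  ⟨table_ruleA hp, table_ruleB, table_ruleC1, table_ruleC2 hm, table_ruleC3 hm, table_ruleD1,
    table_ruleD2 hm, table_ruleE⟩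

lemma locallyCorrect_iff_of_similar {C C' : Cfg} (hsim : Similar C C')
    (hq : ∀ q, C q = qState ↔ C' q = qState) {p : ℤ × ℤ} :
    LocallyCorrect φ n m C p ↔ LocallyCorrect φ n m C' p := by
  have hcoord q : (C q).coord = (C' q).coord := (hsim q).1
  have hflag q : (C q).flag = (C' q).flag := (hsim q).2.1
  have haval q : (C q).aval = (C' q).aval := (hsim q).2.2.1
  have hpd q : (C q).pd = (C' q).pd := (hsim q).2.2.2.1
  have hpc q : (C q).pc = (C' q).pc := (hsim q).2.2.2.2
  simp only [LocallyCorrect, ruleA, ruleB, ruleC1, ruleC2, ruleC3, ruleD1, ruleD2, ruleE,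
    nbrCoordOK, litHolds, hcoord, hflag, haval, hpd, hpc, hq]

lemma IsConfig.eq_qState_iff {C : Cfg} (hC : IsConfig n m C) {p : ℤ × ℤ} :
    C p = qState ↔ ¬ inside n m p :=
  ⟨fun h hp => hC.2.1 p hp h, hC.2.2 p⟩

end CA

open CA in
theorem stmt_2_general (n m : ℕ) (hm : 1 ≤ m) (φ : CNF)
    (a : ℤ → Bool) (C : Cfg) (hC : IsConfig n m C)
    (hsim : Similar C (Table φ n m a)) :
    (∀ p : ℤ × ℤ, inside n m p → LocallyCorrect φ n m C p) ∧
    (∀ p : ℤ × ℤ, inside n m p → LocallyCorrect φ n m (Table φ n m a) p) := by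
  have hquiet q : C q = qState ↔ Table φ n m a q = qState := by
    rw [hC.eq_qState_iff, table_eq_qState_iff]
  exact ⟨fun p hp => (locallyCorrect_iff_of_similar hsim hquiet).2 (table_locallyCorrect hm hp),
    fun p hp => table_locallyCorrect hm hp⟩

open CA in
/-- If `C ∼ Table_φ(a)` then every cell of `C` inside the
rectangle is locally correct; in particular `Table_φ(a)` is locally correct. -/
theorem stmt_2 (n m : ℕ) (hn : 1 ≤ n) (hnodd : Odd n) (hm : 1 ≤ m) (φ : CNF)
    (a : ℤ → Bool) (C : Cfg) (hC : IsConfig n m C)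
    (hsim : Similar C (Table φ n m a)) :
    (∀ p : ℤ × ℤ, inside n m p → LocallyCorrect φ n m C p) ∧
    (∀ p : ℤ × ℤ, inside n m p → LocallyCorrect φ n m (Table φ n m a) p) :=
  stmt_2_general n m hm φ a C hC hsim
end

section
/- If a configuration C ∈ Config_{n,m} contains a cycle, then every cell of C inside the rectangle [n+1]×[m+2] belongs to this cycle. -/
/-!
By rule (A), a blue cell whose written coordinates are `z` sees each in-range neighbour
`z + d` exactly in direction `d`, so passing to the successor moves the cell position by
`suc z - z`: the offset "position minus written coordinates" is constant along a cycle,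
while the written coordinates follow the orbit of `suc`. For odd `n` the map `suc` is a
single cyclic permutation of the rectangle (right along even rows, left along odd rows,
back up column `0`), so the coordinates of the cycle take every value in the rectangle.
Taking the values `(0, 0)` and `(n, m + 1)` and using that the cycle lies inside the
rectangle forces the offset to be `0`.
-/

section Iterate

variable {α : Type*} {f : α → α}

theorem exists_iterate_eq_of_reflTransGen {a b : α}
    (h : Relation.ReflTransGen (fun x y => f x = y) a b) : ∃ t, f^[t] a = b := by
  induction h with
  | refl => exact ⟨0, rfl⟩
  | tail _ hbc ih =>
    obtain ⟨t, rfl⟩ := ih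
    exact ⟨t + 1, by rw [Function.iterate_succ_apply', hbc]⟩

theorem Function.IsPeriodicPt.exists_iterate_iterate_eq {a : α} {T : ℕ}
    (ha : Function.IsPeriodicPt f (T + 1) a) (t : ℕ) : ∃ s, f^[s] (f^[t] a) = a :=
  ⟨T * t, by rw [← Function.iterate_add_apply, ← Nat.succ_mul]; exact (ha.mul_const t).eq⟩

theorem exists_eq_iterate_of_cycle {s : ℕ} (c : Fin (s + 1) → α)
    (hc : ∀ k, c (k + 1) = f (c k)) (t : ℕ) : ∃ k, c k = f^[t] (c 0) := by
  induction t with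
  | zero => exact ⟨0, rfl⟩
  | succ t ih =>
    obtain ⟨k, hk⟩ := ih
    exact ⟨k + 1, by rw [hc, hk, Function.iterate_succ_apply']⟩

end Iterate

namespace CA

variable {n m : ℕ} {i j k : ℤ}

abbrev SnakeReach (n m : ℕ) : ℤ × ℤ → ℤ × ℤ → Prop :=
  Relation.ReflTransGen fun p q => suc n m p = q

lemma suc_zero_zero : suc n m (0, 0) = (0, 1) := by simp [suc]

lemma suc_even_row (hi : Even i) (hj : 1 ≤ j) (hjm : j ≤ m) :
    suc n m (i, j) = (i, j + 1) := by
  simp [suc, hi, hj, hjm]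

lemma suc_even_last (hi : Even i) (hin : i ≠ n) :
    suc n m (i, (m : ℤ) + 1) = (i + 1, (m : ℤ) + 1) := by
  unfold suc; split_ifs <;> simp_all [Prod.ext_iff, Int.even_iff, Int.odd_iff] <;> omega

lemma suc_odd_row (hi : Odd i) (hj : 1 ≤ j) (hjm : j ≤ m) :
    suc n m (i, j + 1) = (i, j) := by
  unfold suc; split_ifs <;> simp_all [Prod.ext_iff, Int.even_iff, Int.odd_iff]; omega

lemma suc_odd_first (hi : Odd i) (hin : i ≠ n) : suc n m (i, 1) = (i + 1, 1) := by
  unfold suc; split_ifs <;> simp_all [Prod.ext_iff, Int.even_iff, Int.odd_iff]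

lemma suc_last_first (hn : Odd n) : suc n m ((n : ℤ), 1) = ((n : ℤ), 0) := by
  have : (n : ℤ) % 2 = 1 := by obtain ⟨k, rfl⟩ := hn; push_cast; omega
  unfold suc; split_ifs <;> simp_all [Prod.ext_iff, Int.even_iff, Int.odd_iff]

lemma suc_first_col (hi : 0 ≤ i) : suc n m (i + 1, 0) = (i, 0) := by
  unfold suc; split_ifs <;> simp_all [Prod.ext_iff, Int.even_iff, Int.odd_iff] <;> omega

lemma snakeReach_even_row (hi : Even i) (hj : 1 ≤ j) (hjk : j ≤ k) (hk : k ≤ m + 1) :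
    SnakeReach n m (i, j) (i, k) := by
  induction k, hjk using Int.leInduction with
  | base => rfl
  | succ k _ ih => exact (ih (by omega)).tail (suc_even_row hi (by omega) (by omega))

lemma snakeReach_odd_row (hi : Odd i) (hj : 1 ≤ j) (hjk : j ≤ k) (hk : k ≤ m + 1) :
    SnakeReach n m (i, k) (i, j) := by
  induction k, hjk using Int.leInduction with
  | base => rfl
  | succ k _ ih => exact .head (suc_odd_row hi (by omega) (by omega)) (ih (by omega))

lemma snakeReach_first_col (hj : 0 ≤ j) (hji : j ≤ i) :
    SnakeReach n m (i, 0) (j, 0) := by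
  induction i, hji using Int.leInduction with
  | base => rfl
  | succ i hji ih => exact .head (suc_first_col (by omega)) ih

lemma snakeReach_origin_of_one_le (hi : 0 ≤ i) (hin : i ≤ n) (hj : 1 ≤ j)
    (hjm : j ≤ m + 1) :
    SnakeReach n m (0, 0) (i, j) := by
  induction i, hi using Int.leInduction generalizing j with
  | base => exact .head suc_zero_zero (snakeReach_even_row Even.zero le_rfl hj hjm)
  | succ i hi ih =>
    rcases Int.even_or_odd i with hev | hodd
    · have h := (ih (j := m + 1) (by omega) (by omega) le_rfl).tail (suc_even_last hev (by omega))
      exact h.trans (snakeReach_odd_row hev.add_one hj hjm le_rfl)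
    · have h := (ih (j := 1) (by omega) le_rfl (by omega)).tail (suc_odd_first hodd (by omega))
      exact h.trans (snakeReach_even_row hodd.add_one le_rfl hj hjm)

lemma snakeReach_origin (hn : Odd n) {p : ℤ × ℤ} (hp : inside n m p) :
    SnakeReach n m (0, 0) p := by
  obtain ⟨i, j⟩ := p
  obtain ⟨hi, hin, hj, hjm⟩ := hp
  obtain hj | rfl : 1 ≤ j ∨ j = 0 := by omega
  · exact snakeReach_origin_of_one_le hi hin hj hjm
  · exact ((snakeReach_origin_of_one_le (by omega) le_rfl le_rfl (by omega)).tail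
      (suc_last_first hn)).trans (snakeReach_first_col hi hin)

lemma isPeriodicPt_suc_origin (hn : Odd n) :
    ∃ T, Function.IsPeriodicPt (suc n m) (T + 1) (0, 0) := by
  have hn1 : (1 : ℤ) ≤ n := by exact_mod_cast hn.pos
  obtain ⟨T, hT⟩ := exists_iterate_eq_of_reflTransGen
    (snakeReach_origin (m := m) hn (p := (1, 0)) ⟨zero_le_one, hn1, le_rfl, by omega⟩)
  refine ⟨T, ?_⟩
  rw [Function.IsPeriodicPt, Function.IsFixedPt, Function.iterate_succ_apply', hT]
  exact suc_first_col (i := 0) le_rfl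

theorem exists_iterate_suc_eq (hn : Odd n) {p q : ℤ × ℤ} (hp : inside n m p)
    (hq : inside n m q) : ∃ t, (suc n m)^[t] p = q := by
  obtain ⟨t, rfl⟩ := exists_iterate_eq_of_reflTransGen (snakeReach_origin hn hp)
  obtain ⟨T, hT⟩ := isPeriodicPt_suc_origin (m := m) hn
  obtain ⟨s, hs⟩ := hT.exists_iterate_iterate_eq t
  obtain ⟨u, rfl⟩ := exists_iterate_eq_of_reflTransGen (snakeReach_origin hn hq)
  exact ⟨u + s, by rw [Function.iterate_add_apply, hs]⟩

lemma ValidState.exists_coord {s : CellState} (hs : ValidState n m s) (hq : s ≠ qState) :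
    ∃ z : ℤ × ℤ, s.coord = (some z.1, some z.2) ∧ inside n m z := by
  rcases hs with ⟨l, rfl⟩ | ⟨i, l, hi, hin, rfl⟩ | ⟨j, a, l, hj, hjm, rfl⟩ | ⟨l, rfl⟩ |
      ⟨i, pc, l, hi, hin, rfl⟩ | ⟨i, j, fl, a, pd, l, hi, hin, hj, hjm, -, rfl⟩ |
      rfl
  · exact ⟨(0, 0), rfl, by simp only [inside]; omega⟩
  · exact ⟨(i, 0), rfl, by simp only [inside]; omega⟩
  · exact ⟨(0, j), rfl, by simp only [inside]; omega⟩
  · exact ⟨(0, (m : ℤ) + 1), rfl, by simp only [inside]; omega⟩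
  · exact ⟨(i, (m : ℤ) + 1), rfl, by simp only [inside]; omega⟩
  · exact ⟨(i, j), rfl, by simp only [inside]; omega⟩
  · exact absurd rfl hq

lemma nbrCoordOK.eq_of_coord {C : Cfg} {q idx w : ℤ × ℤ} (h : nbrCoordOK n m C q idx)
    (hw : (C q).coord = (some w.1, some w.2)) : w = idx := by
  by_cases hidx : inside n m idx
  · rw [h.1 hidx] at hw
    simp only [Prod.mk.injEq, Option.some.injEq] at hw
    exact Prod.ext hw.1.symm hw.2.symm
  · simp [h.2 hidx, qState] at hw

lemma ruleA.sub_eq_coord_sub {C : Cfg} {p q z w : ℤ × ℤ} (hA : ruleA n m C p)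
    (hz : inside n m z) (hp : (C p).coord = (some z.1, some z.2)) (hpq : vnNbr p q)
    (hq : (C q).coord = (some w.1, some w.2)) : q - p = w - z := by
  obtain ⟨hR, hL, hB, hT⟩ := (hA z.1 z.2 hz.1 hz.2.1 hz.2.2.1 hz.2.2.2).1 hp
  rcases hpq with rfl | rfl | rfl | rfl
  · obtain rfl := hR.eq_of_coord hq; ext <;> simp [rightN]
  · obtain rfl := hL.eq_of_coord hq; ext <;> simp [leftN]
  · obtain rfl := hB.eq_of_coord hq; ext <;> simp [belowN]
  · obtain rfl := hT.eq_of_coord hq; ext <;> simp [aboveN]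

lemma IsSucc.eq_suc_and_sub_eq {C : Cfg} {p q z w : ℤ × ℤ} (h : IsSucc n m C p q)
    (hA : ruleA n m C p) (hz : inside n m z) (hp : (C p).coord = (some z.1, some z.2))
    (hq : (C q).coord = (some w.1, some w.2)) : w = suc n m z ∧ q - w = p - z := by
  obtain ⟨hpq, i, j, hp', hq'⟩ := h
  obtain rfl : z = (i, j) := by
    rw [hp] at hp'
    simp only [Prod.mk.injEq, Option.some.injEq] at hp'
    exact Prod.ext hp'.1 hp'.2
  have hw : w = suc n m (i, j) := by
    rw [hq] at hq'
    simp only [Prod.mk.injEq, Option.some.injEq] at hq'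
    exact Prod.ext hq'.1 hq'.2
  exact ⟨hw, sub_eq_sub_iff_sub_eq_sub.1 (hA.sub_eq_coord_sub hz hp hpq hq)⟩

lemma eq_zero_of_inside_of_inside_add {d : ℤ × ℤ} (h₀ : inside n m d)
    (h₁ : inside n m (d + ((n : ℤ), (m : ℤ) + 1))) : d = 0 := by
  obtain ⟨d₁, d₂⟩ := d
  simp only [inside, Prod.mk_add_mk] at h₀ h₁
  ext <;> simp <;> omega

end CA

open CA in
theorem stmt_6_general (n m : ℕ) (hnodd : Odd n) (φ : CNF)
    (C : Cfg) (hC : IsConfig n m C) (s : ℕ) (c : Fin (s + 1) → ℤ × ℤ)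
    (hblue : ∀ k : Fin (s + 1), Blue φ n m C (c k))
    (hsucc : ∀ k : Fin (s + 1), IsSucc n m C (c k) (c (k + 1))) :
    ∀ p : ℤ × ℤ, inside n m p → ∃ k : Fin (s + 1), c k = p := by
  obtain ⟨hvalid, -, hout⟩ := hC
  have hc_inside : ∀ k, inside n m (c k) := fun k => by_contra fun h => (hblue k).1 (hout _ h)
  choose x hx hx_inside using fun k => (hvalid (c k)).exists_coord (hblue k).1
  have hstep : ∀ k, (c (k + 1) - x (k + 1), x (k + 1)) =
      Prod.map id (suc n m) (c k - x k, x k) := fun k => by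
    obtain ⟨hx', hc'⟩ :=
      (hsucc k).eq_suc_and_sub_eq (hblue k).2.1.1 (hx_inside k) (hx k) (hx (k + 1))
    exact Prod.ext hc' hx'
  have horbit : ∀ t, ∃ k, c k - x k = c 0 - x 0 ∧ x k = (suc n m)^[t] (x 0) := fun t => by
    obtain ⟨k, hk⟩ := exists_eq_iterate_of_cycle (fun k => (c k - x k, x k)) hstep t
    rw [Prod.map_iterate, Function.iterate_id, Prod.map_apply, Prod.mk.injEq] at hk
    exact ⟨k, hk⟩
  have hreach : ∀ q, inside n m q → ∃ k, c k = (c 0 - x 0) + q := fun q hq => by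
    obtain ⟨t, ht⟩ := exists_iterate_suc_eq hnodd (hx_inside 0) hq
    obtain ⟨k, hδ, hk⟩ := horbit t
    exact ⟨k, by rw [← hδ, hk, ht, sub_add_cancel]⟩
  have hδ : c 0 - x 0 = 0 := by
    obtain ⟨k₀, hk₀⟩ := hreach 0 (by simp [inside]; omega)
    obtain ⟨k₁, hk₁⟩ := hreach (n, m + 1) (by simp only [inside]; omega)
    exact eq_zero_of_inside_of_inside_add (by simpa [hk₀] using hc_inside k₀)
      (hk₁ ▸ hc_inside k₁)
  intro p hp
  obtain ⟨k, hk⟩ := hreach p hp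
  exact ⟨k, by rw [hk, hδ, zero_add]⟩

open CA in
/-- If a configuration `C ∈ Config_{n,m}` contains a cycle
(a nonempty cyclic sequence of blue cells, each followed by its successor),
then every cell of `C` inside the rectangle belongs to this cycle. -/
theorem stmt_6 (n m : ℕ) (hn : 1 ≤ n) (hnodd : Odd n) (hm : 1 ≤ m) (φ : CNF)
    (C : Cfg) (hC : IsConfig n m C) (s : ℕ) (c : Fin (s + 1) → ℤ × ℤ)
    (hblue : ∀ k : Fin (s + 1), Blue φ n m C (c k))
    (hsucc : ∀ k : Fin (s + 1), IsSucc n m C (c k) (c (k + 1))) :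
    ∀ p : ℤ × ℤ, inside n m p → ∃ k : Fin (s + 1), c k = p :=
  stmt_6_general n m hnodd φ C hC s c hblue hsucc
end
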